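/- Let E_tr : ℝ^N → Sym(3×3) be a twice continuously differentiable map and let C be a symmetric positive definite fourth-order tensor on symmetric 3×3 matrices. If the function (E, χ) ↦ ½ C(E − E_tr(χ)) : (E − E_tr(χ)) is convex on Sym(3×3) × ℝ^N, then E_tr is affine. -/

import Mathlib

/-!
The energy vanishes on the graph `{(E_tr χ, χ)}`, so convexity along the segment joining
`(E_tr χ₀, χ₀)` and `(E_tr χ₁, χ₁)` makes it nonpositive at the midpoint of that segment, where it
equals `½ C A : A` for the symmetric defect `A = ½ (E_tr χ₀ + E_tr χ₁) - E_tr (½ (χ₀ + χ₁))`.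
Positive definiteness forces `A = 0`, so `E_tr` preserves midpoints, and a continuous map
preserving midpoints is affine.
-/

open Matrix

variable {E V : Type*} [AddCommGroup E] [Module ℝ E] [AddCommGroup V] [Module ℝ V]

theorem map_midpoint_of_convexOn_comp_sub (S : Submodule ℝ V) (f : E → V) (hfS : ∀ x, f x ∈ S)
    (q : V → ℝ) (hq0 : q 0 = 0) (hqpos : ∀ A ∈ S, A ≠ 0 → 0 < q A)
    (hconv : ConvexOn ℝ {p : V × E | p.1 ∈ S} (fun p => q (p.1 - f p.2))) (x y : E) :
    f (midpoint ℝ x y) = midpoint ℝ (f x) (f y) := by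
  set A := midpoint ℝ (f x) (f y) - f (midpoint ℝ x y)
  have hAS : A ∈ S := by
    refine S.sub_mem ?_ (hfS _)
    rw [midpoint_eq_smul_add]
    exact S.smul_mem _ (S.add_mem (hfS x) (hfS y))
  have hqA : q A ≤ 0 := by
    have h := hconv.2 (x := (f x, x)) (y := (f y, y)) (hfS x) (hfS y)
      (by norm_num : (0 : ℝ) ≤ 1 / 2) (by norm_num : (0 : ℝ) ≤ 1 / 2) (by norm_num)
    have hcomb : (1 / 2 : ℝ) • (f x, x) + (1 / 2 : ℝ) • (f y, y)
        = (midpoint ℝ (f x) (f y), midpoint ℝ x y) := by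
      simp only [midpoint_eq_smul_add, Prod.smul_mk, Prod.mk_add_mk, smul_add, invOf_eq_inv]
      norm_num
    simpa only [hcomb, sub_self, hq0, smul_zero, add_zero] using h
  by_contra hne
  exact (hqpos A hAS (sub_ne_zero.2 (Ne.symm hne))).not_ge hqA

theorem exists_linearMap_add_const_of_map_midpoint [TopologicalSpace E] [ContinuousSMul ℝ E]
    [TopologicalSpace V] [ContinuousSub V] [ContinuousSMul ℝ V] [T2Space V]
    (f : E → V) (hf : Continuous f) (hmid : ∀ x y, f (midpoint ℝ x y) = midpoint ℝ (f x) (f y)) :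
    ∃ (L : E →ₗ[ℝ] V) (c : V), ∀ x, f x = L x + c := by
  let g : E →+ V := AddMonoidHom.ofMapMidpoint ℝ ℝ (fun x => f x - f 0) (sub_self _)
    fun x y => by
      rw [hmid, ← vsub_eq_sub, ← vsub_eq_sub, ← vsub_eq_sub, ← midpoint_vsub_midpoint, midpoint_self]
  refine ⟨(g.toRealLinearMap (hf.sub continuous_const)).toLinearMap, f 0, fun x => ?_⟩
  exact (sub_add_cancel (f x) (f 0)).symm

def Matrix.symmetricSubmodule (n R : Type*) [Semiring R] : Submodule R (Matrix n n R) where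
  carrier := {A | Aᵀ = A}
  add_mem' {A B} hA hB := by simp_all [transpose_add]
  zero_mem' := transpose_zero
  smul_mem' c A hA := by simp_all [transpose_smul]

theorem stmt0_general (N : ℕ)
    (Etr : (Fin N → ℝ) → Matrix (Fin 3) (Fin 3) ℝ)
    (C : Matrix (Fin 3) (Fin 3) ℝ →ₗ[ℝ] Matrix (Fin 3) (Fin 3) ℝ)
    (hEtr : ContDiff ℝ 2 (fun χ (i j : Fin 3) => Etr χ i j))
    (hEtrSym : ∀ χ, (Etr χ)ᵀ = Etr χ)
    (hCpos : ∀ A : Matrix (Fin 3) (Fin 3) ℝ, Aᵀ = A → A ≠ 0 → 0 < ((C A)ᵀ * A).trace)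
    (hconv : ConvexOn ℝ {p : Matrix (Fin 3) (Fin 3) ℝ × (Fin N → ℝ) | p.1ᵀ = p.1}
      (fun p => (1 / 2) * ((C (p.1 - Etr p.2))ᵀ * (p.1 - Etr p.2)).trace)) :
    ∃ (L : (Fin N → ℝ) →ₗ[ℝ] Matrix (Fin 3) (Fin 3) ℝ) (c : Matrix (Fin 3) (Fin 3) ℝ),
      ∀ χ, Etr χ = L χ + c := by
  have hmid := map_midpoint_of_convexOn_comp_sub (symmetricSubmodule (Fin 3) ℝ) Etr hEtrSym
    (fun A => (1 / 2) * ((C A)ᵀ * A).trace) (by simp)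
    (fun A hA hA0 => mul_pos one_half_pos (hCpos A hA hA0)) hconv
  exact exists_linearMap_add_const_of_map_midpoint Etr hEtr.continuous hmid

theorem stmt0 (N : ℕ)
    (Etr : (Fin N → ℝ) → Matrix (Fin 3) (Fin 3) ℝ)
    (C : Matrix (Fin 3) (Fin 3) ℝ →ₗ[ℝ] Matrix (Fin 3) (Fin 3) ℝ)
    (hEtr : ContDiff ℝ 2 (fun χ (i j : Fin 3) => Etr χ i j))
    (hEtrSym : ∀ χ, (Etr χ)ᵀ = Etr χ)
    (hCsym : ∀ A B : Matrix (Fin 3) (Fin 3) ℝ, ((C A)ᵀ * B).trace = (Aᵀ * C B).trace)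
    (hCpos : ∀ A : Matrix (Fin 3) (Fin 3) ℝ, Aᵀ = A → A ≠ 0 → 0 < ((C A)ᵀ * A).trace)
    (hconv : ConvexOn ℝ {p : Matrix (Fin 3) (Fin 3) ℝ × (Fin N → ℝ) | p.1ᵀ = p.1}
      (fun p => (1 / 2) * ((C (p.1 - Etr p.2))ᵀ * (p.1 - Etr p.2)).trace)) :
    ∃ (L : (Fin N → ℝ) →ₗ[ℝ] Matrix (Fin 3) (Fin 3) ℝ) (c : Matrix (Fin 3) (Fin 3) ℝ),
      ∀ χ, Etr χ = L χ + c :=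
  stmt0_general N Etr C hEtr hEtrSym hCpos hconv
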